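/- arXiv:2502.05264 — 5 statements merged into one kernel-verified Lean document; each statement's English description precedes it below -/
import Mathlib

section
/- Let S be a nonempty finite index set and for each x ∈ S let H_x be a d×d complex Hermitian matrix with 0 ⪯ H_x ⪯ I. Let H_S = (1/|S|) Σ_{x∈S} H_x, let ρ be a d×d density matrix, and let η ∈ (0, 1]. Then ‖ (1/|S|) Σ_{x∈S} (I − ηH_x) ρ (I − ηH_x) − e^{−ηH_S} ρ e^{−ηH_S} ‖₁ ≤ 4η². Equivalently, the average over x of (I − ηH_x)ρ(I − ηH_x) equals e^{−ηH_S} ρ e^{−ηH_S} + η²·O for a Hermitian matrix O with trace norm at most 4. -/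
open Matrix
open scoped ComplexOrder

/-- The trace norm (sum of singular values) of a complex square matrix. -/
noncomputable def traceNorm {d : ℕ} (A : Matrix (Fin d) (Fin d) ℂ) : ℝ :=
  ((((Matrix.posSemidef_conjTranspose_mul_self A).1.eigenvectorUnitary : Matrix (Fin d) (Fin d) ℂ) *
      diagonal (((↑) : ℝ → ℂ) ∘ (√·) ∘ (Matrix.posSemidef_conjTranspose_mul_self A).1.eigenvalues) *
      (star (Matrix.posSemidef_conjTranspose_mul_self A).1.eigenvectorUnitary :
        Matrix (Fin d) (Fin d) ℂ)).trace).re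

/-- The matrix exponential of a complex square matrix. -/
noncomputable def mexp {d : ℕ} (A : Matrix (Fin d) (Fin d) ℂ) : Matrix (Fin d) (Fin d) ℂ :=
  NormedSpace.exp A

/-!
Put `A = η H_S`, `X = 1 - A`, `Y = e^{-A}` and let `K` be the average of `H_x ρ H_x`. Expanding the
square, the averaged update is `X ρ X + η² (K - H_S ρ H_S)`, so the error is
`η² K - A ρ A + (X ρ X - Y ρ Y)`. The first two terms are positive with trace at most `η²`.
For the third, `X ρ X - Y ρ Y = (S ρ E + E ρ S) / 2` with `S = X + Y`, `E = X - Y`, and the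
operator AM-GM inequality traps it between `±N`, `N = (a² S ρ S + a⁻² E ρ E) / 2`. On the spectrum
of `A`, which lies in `[0, η]`, functional calculus gives `S² ≤ 4` and, from
`1 - x ≤ e^{-x} ≤ 1 - x + x²/2`, `E² ≤ η⁴/4`; with `a = η/2` the trace of `N` is at most `η²`.
Finally, `-Q ≤ D ≤ P` with `P, Q ≥ 0` bounds the trace norm of `D` by `tr P + tr Q` (read off in an
eigenbasis of `D`); here `P = η² K + N` and `Q = A ρ A + N`.
-/

open scoped MatrixOrder

namespace Matrix

variable {n : Type*}

lemma re_diag_le_of_le {A B : Matrix n n ℂ} (h : A ≤ B) (i : n) : (A i i).re ≤ (B i i).re := by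
  simpa using (Complex.le_def.mp (sub_nonneg.mp (le_iff.mp h).diag_nonneg)).1

variable [Fintype n]

lemma re_trace_le_of_le {A B : Matrix n n ℂ} (h : A ≤ B) : A.trace.re ≤ B.trace.re := by
  simpa using (Complex.le_def.mp (le_iff.mp h).trace_nonneg).1

variable [DecidableEq n]

lemma IsHermitian.trace_cfc {𝕜 : Type*} [RCLike 𝕜] {A : Matrix n n 𝕜} (hA : A.IsHermitian)
    (f : ℝ → ℝ) : (cfc f A).trace = ∑ i, (f (hA.eigenvalues i) : 𝕜) := by
  rw [hA.cfc_eq, IsHermitian.cfc, Unitary.conjStarAlgAut_apply, trace_mul_cycle,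
    Unitary.coe_star_mul_self, one_mul]
  simp

lemma re_trace_mul_mul_le {ρ X : Matrix n n ℂ} (hρ : 0 ≤ ρ) (hρtr : ρ.trace = 1) {c : ℝ}
    (hX : X * X ≤ algebraMap ℝ _ c) : (X * ρ * X).trace.re ≤ c := by
  set r := CFC.sqrt ρ
  have hr : IsSelfAdjoint r := .of_nonneg (CFC.sqrt_nonneg ρ)
  have hρr : ρ = r * r := (CFC.sqrt_mul_sqrt_self ρ hρ).symm
  have hcyc : (X * ρ * X).trace = (r * (X * X) * r).trace := by
    rw [hρr, trace_mul_cycle, ← mul_assoc, ← mul_assoc, trace_mul_cycle, ← mul_assoc]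
  have hle : r * (X * X) * r ≤ c • ρ := by
    simpa [Algebra.algebraMap_eq_smul_one, hρr] using hr.conjugate_le_conjugate hX
  rw [hcyc]
  simpa [trace_smul, hρtr] using re_trace_le_of_le hle

end Matrix

section StarOrdered

variable {R : Type*} [Ring R] [PartialOrder R] [StarRing R] [StarOrderedRing R] [Algebra ℝ R]
  [StarModule ℝ R]

lemma conj_sub_conj_le {X Y ρ : R} (hX : IsSelfAdjoint X) (hY : IsSelfAdjoint Y) (hρ : 0 ≤ ρ)
    {a b : ℝ} (hab : a * b = 1) :
    X * ρ * X - Y * ρ * Y ≤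
      (1 / 2 : ℝ) • (a ^ 2 • ((X + Y) * ρ * (X + Y)) + b ^ 2 • ((X - Y) * ρ * (X - Y))) := by
  set c := a • (X + Y) - b • (X - Y)
  have hc : IsSelfAdjoint c :=
    ((IsSelfAdjoint.all a).smul (hX.add hY)).sub ((IsSelfAdjoint.all b).smul (hX.sub hY))
  have key : (1 / 2 : ℝ) • (a ^ 2 • ((X + Y) * ρ * (X + Y)) + b ^ 2 • ((X - Y) * ρ * (X - Y)))
      - (X * ρ * X - Y * ρ * Y) = (1 / 2 : ℝ) • (c * ρ * c) := by
    simp only [c, add_mul, mul_add, sub_mul, mul_sub, smul_mul_assoc, mul_smul_comm]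
    linear_combination (norm := module) hab • (X * ρ * X - Y * ρ * Y)
  rw [← sub_nonneg, key]
  exact smul_nonneg (by norm_num) (IsSelfAdjoint.conjugate_nonneg hρ hc)

end StarOrdered

section CFC

variable {R : Type*} [Ring R] [StarRing R] [TopologicalSpace R] [Algebra ℝ R] [PartialOrder R]
  [StarOrderedRing R] [ContinuousFunctionalCalculus ℝ R IsSelfAdjoint]

lemma spectrum_subset_Icc_of_nonneg_of_le [NonnegSpectrumClass ℝ R] {a : R} {r : ℝ}
    (h₀ : 0 ≤ a) (h₁ : a ≤ algebraMap ℝ R r) : spectrum ℝ a ⊆ Set.Icc 0 r :=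
  fun x hx => ⟨(StarOrderedRing.nonneg_iff_spectrum_nonneg a).mp h₀ x hx,
    (le_algebraMap_iff_spectrum_le (IsSelfAdjoint.of_nonneg h₀)).mp h₁ x hx⟩

lemma mul_self_le_algebraMap_of_spectrum {a : R} (ha : IsSelfAdjoint a) {c : ℝ}
    (h : ∀ x ∈ spectrum ℝ a, x ^ 2 ≤ c) : a * a ≤ algebraMap ℝ R c := by
  rw [← cfc_id' ℝ a, ← cfc_mul ..]
  exact cfc_le_algebraMap _ _ _ (by simpa [sq] using h)

lemma mul_self_le_algebraMap_sq_of_nonneg_of_le [NonnegSpectrumClass ℝ R] {a : R} {r : ℝ}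
    (h₀ : 0 ≤ a) (h₁ : a ≤ algebraMap ℝ R r) : a * a ≤ algebraMap ℝ R (r ^ 2) :=
  mul_self_le_algebraMap_of_spectrum (.of_nonneg h₀) fun _ hx =>
    have hx' := spectrum_subset_Icc_of_nonneg_of_le h₀ h₁ hx
    pow_le_pow_left₀ hx'.1 hx'.2 2

end CFC

lemma Matrix.re_trace_mul_mul_le_sq {n : Type*} [Fintype n] [DecidableEq n]
    {ρ X : Matrix n n ℂ} (hρ : 0 ≤ ρ) (hρtr : ρ.trace = 1) {r : ℝ} (h₀ : 0 ≤ X)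
    (h₁ : X ≤ algebraMap ℝ _ r) : (X * ρ * X).trace.re ≤ r ^ 2 :=
  re_trace_mul_mul_le hρ hρtr (mul_self_le_algebraMap_sq_of_nonneg_of_le h₀ h₁)

lemma Real.exp_neg_le_one_sub_add_sq_div_two {x : ℝ} (hx : 0 ≤ x) :
    Real.exp (-x) ≤ 1 - x + x ^ 2 / 2 := by
  have hpos : 0 < 1 - x + x ^ 2 / 2 := by nlinarith
  rw [Real.exp_neg, inv_le_comm₀ (Real.exp_pos x) hpos]
  calc (1 - x + x ^ 2 / 2)⁻¹ ≤ 1 + x + x ^ 2 / 2 := by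
        rw [inv_le_iff_one_le_mul₀ hpos]; nlinarith [sq_nonneg (x ^ 2)]
    _ ≤ Real.exp x := Real.quadratic_le_exp_of_nonneg hx

lemma Convex.inv_card_smul_sum_mem {𝕜 E ι : Type*} [Field 𝕜] [LinearOrder 𝕜]
    [IsStrictOrderedRing 𝕜] [AddCommGroup E] [Module 𝕜 E] [Fintype ι] [Nonempty ι] {s : Set E}
    (hs : Convex 𝕜 s) {z : ι → E} (hz : ∀ i, z i ∈ s) :
    (Fintype.card ι : 𝕜)⁻¹ • ∑ i, z i ∈ s := by
  simpa [Finset.centerMass] using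
    hs.centerMass_mem (t := Finset.univ) (w := fun _ => 1) (by simp)
      (by simpa using Fintype.card_pos) (fun i _ => hz i)

lemma inv_card_smul_sum_conj_one_sub_smul {𝕜 R ι : Type*} [Field 𝕜] [CharZero 𝕜] [Ring R]
    [Algebra 𝕜 R] [Fintype ι] [Nonempty ι] (H : ι → R) (ρ : R) (c : 𝕜) :
    (Fintype.card ι : 𝕜)⁻¹ • ∑ x, (1 - c • H x) * ρ * (1 - c • H x) =
      (1 - c • ((Fintype.card ι : 𝕜)⁻¹ • ∑ x, H x)) * ρ *
          (1 - c • ((Fintype.card ι : 𝕜)⁻¹ • ∑ x, H x)) +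
        c ^ 2 • ((Fintype.card ι : 𝕜)⁻¹ • ∑ x, H x * ρ * H x -
          ((Fintype.card ι : 𝕜)⁻¹ • ∑ x, H x) * ρ * ((Fintype.card ι : 𝕜)⁻¹ • ∑ x, H x)) := by
  have hcard : (Fintype.card ι : 𝕜)⁻¹ * Fintype.card ι = 1 :=
    inv_mul_cancel₀ (Nat.cast_ne_zero.mpr Fintype.card_ne_zero)
  simp only [sub_mul, mul_sub, one_mul, mul_one, smul_mul_assoc, mul_smul_comm, smul_sub,
    Finset.sum_sub_distrib, ← Finset.smul_sum, ← Finset.sum_mul, ← Finset.mul_sum,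
    Finset.sum_const, Finset.card_univ, ← Nat.cast_smul_eq_nsmul 𝕜]
  linear_combination (norm := module) hcard • ρ

lemma traceNorm_eq_re_trace_abs {d : ℕ} (A : Matrix (Fin d) (Fin d) ℂ) :
    traceNorm A = (CFC.abs A).trace.re := by
  have hA := posSemidef_conjTranspose_mul_self A
  rw [CFC.abs, star_eq_conjTranspose, CFC.sqrt_eq_real_sqrt _ hA.nonneg, cfcₙ_eq_cfc,
    hA.1.cfc_eq, IsHermitian.cfc, Unitary.conjStarAlgAut_apply]
  rfl

lemma Matrix.IsHermitian.traceNorm_eq_sum_abs_eigenvalues {d : ℕ}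
    {A : Matrix (Fin d) (Fin d) ℂ} (hA : A.IsHermitian) :
    traceNorm A = ∑ i, |hA.eigenvalues i| := by
  rw [traceNorm_eq_re_trace_abs, CFC.abs_eq_cfc_norm A hA.isSelfAdjoint, hA.trace_cfc,
    Complex.re_sum]
  simp

lemma traceNorm_le_of_neg_le_of_le {d : ℕ} {D P Q : Matrix (Fin d) (Fin d) ℂ}
    (hP : 0 ≤ P) (hQ : 0 ≤ Q) (hDP : D ≤ P) (hQD : -Q ≤ D) :
    traceNorm D ≤ P.trace.re + Q.trace.re := by
  have hD : D.IsHermitian := by simpa using hP.posSemidef.1.sub (le_iff.mp hDP).1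
  set U : Matrix (Fin d) (Fin d) ℂ := ↑hD.eigenvectorUnitary
  have hdiag : star U * D * U = diagonal (fun i => (hD.eigenvalues i : ℂ)) := by
    simpa [Unitary.conjStarAlgAut_apply, Function.comp_def] using
      hD.conjStarAlgAut_star_eigenvectorUnitary
  have htrace (X : Matrix (Fin d) (Fin d) ℂ) : (star U * X * U).trace = X.trace := by
    rw [trace_mul_cycle, Unitary.mul_star_self_of_mem hD.eigenvectorUnitary.2, one_mul]
  have hbound (i : Fin d) :
      |hD.eigenvalues i| ≤ ((star U * P * U) i i).re + ((star U * Q * U) i i).re := by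
    have hPi := re_diag_le_of_le (star_left_conjugate_le_conjugate hDP U) i
    have hQi := re_diag_le_of_le (star_left_conjugate_le_conjugate hQD U) i
    have hP0 := re_diag_le_of_le (star_left_conjugate_nonneg hP U) i
    have hQ0 := re_diag_le_of_le (star_left_conjugate_nonneg hQ U) i
    simp only [hdiag, diagonal_apply_eq, Complex.ofReal_re, mul_neg, neg_mul, Matrix.neg_apply,
      Complex.neg_re, Matrix.zero_apply, Complex.zero_re] at hPi hQi hP0 hQ0
    rw [abs_le]
    constructor <;> linarith
  calc traceNorm D = ∑ i, |hD.eigenvalues i| := hD.traceNorm_eq_sum_abs_eigenvalues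
    _ ≤ ∑ i, (((star U * P * U) i i).re + ((star U * Q * U) i i).re) :=
      Finset.sum_le_sum fun i _ => hbound i
    _ = P.trace.re + Q.trace.re := by
      rw [Finset.sum_add_distrib, ← Complex.re_sum, ← Complex.re_sum, ← htrace P, ← htrace Q]
      rfl

lemma traceNorm_sub_add_le {d : ℕ} {K L M N : Matrix (Fin d) (Fin d) ℂ}
    (hK : 0 ≤ K) (hL : 0 ≤ L) (hNM : -N ≤ M) (hMN : M ≤ N) :
    traceNorm (K - L + M) ≤ K.trace.re + L.trace.re + 2 * N.trace.re := by
  have hN : 0 ≤ N := by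
    have h : 0 ≤ (2 : ℝ)⁻¹ • (N - -N) := smul_nonneg (by norm_num) (sub_nonneg.mpr (hNM.trans hMN))
    rwa [sub_neg_eq_add, ← two_smul ℝ N, smul_smul, inv_mul_cancel₀ two_ne_zero, one_smul] at h
  have h := traceNorm_le_of_neg_le_of_le (D := K - L + M) (add_nonneg hK hN) (add_nonneg hL hN)
    (by rw [← sub_nonneg] at hMN ⊢; convert add_nonneg hL hMN using 1; abel)
    (by rw [← sub_nonneg] at hNM ⊢; convert add_nonneg hK hNM using 1; abel)
  simp only [trace_add, Complex.add_re] at h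
  linarith

open scoped Matrix.Norms.L2Operator in
lemma mexp_neg_eq_cfc {d : ℕ} {A : Matrix (Fin d) (Fin d) ℂ} (hA : IsSelfAdjoint A) :
    mexp (-A) = cfc (fun x => Real.exp (-x)) A := by
  rw [mexp, ← CFC.real_exp_eq_normedSpace_exp hA.neg, cfc_comp_neg _ A]

lemma exists_neg_le_and_le_conj_one_sub_sub_conj_mexp {d : ℕ} {A ρ : Matrix (Fin d) (Fin d) ℂ}
    {η : ℝ} (hA₀ : 0 ≤ A) (hA₁ : A ≤ algebraMap ℝ _ η) (hη0 : 0 < η) (hη1 : η ≤ 1)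
    (hρ : 0 ≤ ρ) (hρtr : ρ.trace = 1) :
    ∃ N, -N ≤ (1 - A) * ρ * (1 - A) - mexp (-A) * ρ * mexp (-A) ∧
      (1 - A) * ρ * (1 - A) - mexp (-A) * ρ * mexp (-A) ≤ N ∧ N.trace.re ≤ η ^ 2 := by
  have hA : IsSelfAdjoint A := .of_nonneg hA₀
  have hσ := spectrum_subset_Icc_of_nonneg_of_le hA₀ hA₁
  set X := 1 - A
  set Y := mexp (-A)
  have hX : X = cfc (fun x : ℝ => 1 - x) A := by rw [cfc_sub .., cfc_const_one .., cfc_id' ..]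
  have hY : Y = cfc (fun x => Real.exp (-x)) A := mexp_neg_eq_cfc hA
  have hXs : IsSelfAdjoint X := hX ▸ cfc_predicate _ _
  have hYs : IsSelfAdjoint Y := hY ▸ cfc_predicate _ _
  have hS : (X + Y) * (X + Y) ≤ algebraMap ℝ _ 4 := by
    rw [hX, hY, ← cfc_add ..]
    refine mul_self_le_algebraMap_of_spectrum (cfc_predicate _ _) ?_
    rw [cfc_map_spectrum ..]
    rintro _ ⟨x, hx, rfl⟩
    obtain ⟨hx0, hxη⟩ := hσ hx
    have : Real.exp (-x) ≤ 1 := Real.exp_le_one_iff.mpr (by linarith)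
    nlinarith [Real.exp_pos (-x)]
  have hE : (X - Y) * (X - Y) ≤ algebraMap ℝ _ ((η ^ 2 / 2) ^ 2) := by
    rw [hX, hY, ← cfc_sub ..]
    refine mul_self_le_algebraMap_of_spectrum (cfc_predicate _ _) ?_
    rw [cfc_map_spectrum ..]
    rintro _ ⟨x, hx, rfl⟩
    obtain ⟨hx0, hxη⟩ := hσ hx
    have hlo : 1 - x ≤ Real.exp (-x) := by linarith [Real.add_one_le_exp (-x)]
    have hhi := Real.exp_neg_le_one_sub_add_sq_div_two hx0
    have hx2 : x ^ 2 ≤ η ^ 2 := by gcongr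
    exact sq_le_sq' (by linarith) (by linarith [sq_nonneg η])
  refine ⟨(1 / 2 : ℝ) • ((η / 2) ^ 2 • ((X + Y) * ρ * (X + Y)) +
    (2 / η) ^ 2 • ((X - Y) * ρ * (X - Y))), ?_, conj_sub_conj_le hXs hYs hρ (by field_simp), ?_⟩
  · rw [neg_le]
    convert conj_sub_conj_le hYs hXs hρ (a := η / 2) (b := 2 / η) (by field_simp) using 1
    · abel
    · rw [add_comm Y X, ← neg_sub X Y]
      simp only [neg_mul, mul_neg, neg_neg]
  · have hStr := re_trace_mul_mul_le hρ hρtr hS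
    have hEtr := re_trace_mul_mul_le hρ hρtr hE
    simp only [trace_smul, trace_add, Complex.real_smul, Complex.add_re, Complex.re_ofReal_mul]
    calc _ ≤ 1 / 2 * ((η / 2) ^ 2 * 4 + (2 / η) ^ 2 * (η ^ 2 / 2) ^ 2) := by gcongr
      _ = η ^ 2 := by field_simp; ring

/-- Lemma S2: a single step of the QAL update, averaged over the training set,
is the imaginary time evolution up to a second-order error of trace norm `≤ 4η²`. -/
theorem qal_single_step_imaginary_time {d : ℕ} (ι : Type) [Fintype ι] [Nonempty ι]
    (H : ι → Matrix (Fin d) (Fin d) ℂ)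
    (hH0 : ∀ x, (H x).PosSemidef) (hH1 : ∀ x, (1 - H x).PosSemidef)
    (HS : Matrix (Fin d) (Fin d) ℂ)
    (hHS : HS = (Fintype.card ι : ℂ)⁻¹ • ∑ x : ι, H x)
    (ρ : Matrix (Fin d) (Fin d) ℂ) (hρ : ρ.PosSemidef) (hρtr : ρ.trace = 1)
    (η : ℝ) (hη : η ∈ Set.Ioc (0 : ℝ) 1) :
    traceNorm ((Fintype.card ι : ℂ)⁻¹ •
        ∑ x : ι, (1 - (η : ℂ) • H x) * ρ * (1 - (η : ℂ) • H x)
      - mexp (-((η : ℂ) • HS)) * ρ * mexp (-((η : ℂ) • HS))) ≤ 4 * η ^ 2 := by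
  obtain ⟨hη0, hη1⟩ := hη
  -- pass to real scalars, with which the Loewner order is compatible
  have hcard : (Fintype.card ι : ℂ)⁻¹ = ((Fintype.card ι : ℝ)⁻¹ : ℝ) := by push_cast; rfl
  simp only [hcard, Complex.coe_smul] at hHS ⊢
  rw [inv_card_smul_sum_conj_one_sub_smul, ← hHS]
  have hH x : H x ∈ Set.Icc 0 1 := ⟨(hH0 x).nonneg, le_iff.mpr (hH1 x)⟩
  have hHS01 : HS ∈ Set.Icc 0 1 := hHS ▸ (convex_Icc 0 1).inv_card_smul_sum_mem hH
  set K := (Fintype.card ι : ℝ)⁻¹ • ∑ x, H x * ρ * H x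
  have hK : K ∈ Set.Ici 0 ∩ {M | M.trace.re ≤ 1} :=
    ((convex_Ici 0).inter (convex_halfSpace_le
      (Complex.reLm.comp (traceLinearMap (Fin d) ℝ ℂ)).isLinear 1)).inv_card_smul_sum_mem fun x =>
      ⟨IsSelfAdjoint.conjugate_nonneg hρ.nonneg (hH0 x).1, by
        simpa using
          re_trace_mul_mul_le_sq hρ.nonneg hρtr (r := 1) (hH x).1 (by simpa using (hH x).2)⟩
  set A := η • HS
  have hA₀ : 0 ≤ A := smul_nonneg hη0.le hHS01.1
  have hA₁ : A ≤ algebraMap ℝ _ η := by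
    simpa [Algebra.algebraMap_eq_smul_one] using smul_le_smul_of_nonneg_left hHS01.2 hη0.le
  obtain ⟨N, hNM, hMN, hN⟩ :=
    exists_neg_le_and_le_conj_one_sub_sub_conj_mexp hA₀ hA₁ hη0 hη1 hρ.nonneg hρtr
  calc traceNorm _ = traceNorm (η ^ 2 • K - A * ρ * A +
        ((1 - A) * ρ * (1 - A) - mexp (-A) * ρ * mexp (-A))) := by
        congr 1
        simp only [A, smul_sub, smul_mul_assoc, mul_smul_comm, smul_smul, ← sq]
        abel
    _ ≤ (η ^ 2 • K).trace.re + (A * ρ * A).trace.re + 2 * N.trace.re :=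
        traceNorm_sub_add_le (smul_nonneg (sq_nonneg η) hK.1)
          (IsSelfAdjoint.conjugate_nonneg hρ.nonneg (.of_nonneg hA₀)) hNM hMN
    _ ≤ η ^ 2 * 1 + η ^ 2 + 2 * η ^ 2 := by
        rw [trace_smul, Complex.real_smul, Complex.re_ofReal_mul]
        gcongr
        exacts [hK.2, re_trace_mul_mul_le_sq hρ.nonneg hρtr hA₀ hA₁]
    _ = 4 * η ^ 2 := by ring
end

section
/- Let H be a d×d complex Hermitian matrix with 0 ⪯ H ⪯ I whose smallest eigenvalue is g, such that H has an eigenvalue strictly greater than g, and let δ > 0 be the difference between the second smallest distinct eigenvalue of H and g. Let Π_g be the orthogonal (spectral) projector onto the eigenspace of H for the eigenvalue g, and let σ be a d×d density matrix with σ_g = tr(Π_g σ) > 0. Then for every constant c ∈ (0, 1) there exist η > 0 and a positive integer T such that, setting β = ηT, γ = η²T, and σ(β) = e^{−βH} σ e^{−βH}, for all real numbers c₁, c₂ with |c₁| ≤ 4 and |c₂| ≤ 4 one has tr(σ(β)) + c₁γ > 0 and (tr(H σ(β)) + c₂γ) / (tr(σ(β)) + c₁γ) ≤ g + c. -/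
/-!
In the eigenbasis of `H` the state `σ(β)` has weights `e^{-2βλᵢ} sᵢ`, where `sᵢ ≥ 0` are the
populations of `σ`. The ground part of the energy excess `∑ (λᵢ - g - c) e^{-2βλᵢ} sᵢ` equals
`-c e^{-2βg} σ_g`, while the gap bounds the excited part by `e^{-2β(g+δ)}`. Once
`e^{-2βδ} ≤ c σ_g / 2`, the numerator is below `(g + c)` times the denominator by the margin
`c σ_g e^{-2βg} / 2`, and splitting `β = ηT` with `T` large makes `γ = β² / T` too small for the
perturbations `c₁γ`, `c₂γ` to close it.
-/

open Matrix
open scoped ComplexOrder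

noncomputable def spectralProj {d : ℕ} {H : Matrix (Fin d) (Fin d) ℂ}
    (hH : H.IsHermitian) (E : ℝ) : Matrix (Fin d) (Fin d) ℂ :=
  (hH.eigenvectorUnitary : Matrix (Fin d) (Fin d) ℂ) *
    Matrix.diagonal (fun i => if hH.eigenvalues i ≤ E then (1 : ℂ) else 0) *
    star (hH.eigenvectorUnitary : Matrix (Fin d) (Fin d) ℂ)

namespace Matrix.IsHermitian

variable {n 𝕜 : Type*} [Fintype n] [DecidableEq n] [RCLike 𝕜] {H : Matrix n n 𝕜}
  (hH : H.IsHermitian)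

noncomputable def populations (σ : Matrix n n 𝕜) (i : n) : ℝ :=
  RCLike.re ((star (hH.eigenvectorUnitary : Matrix n n 𝕜) * σ * hH.eigenvectorUnitary) i i)

lemma re_trace_cfc_mul (f : ℝ → ℝ) (σ : Matrix n n 𝕜) :
    RCLike.re (cfc f H * σ).trace = ∑ i, f (hH.eigenvalues i) * hH.populations σ i := by
  set U : Matrix n n 𝕜 := (hH.eigenvectorUnitary : Matrix n n 𝕜)
  rw [hH.cfc_eq, IsHermitian.cfc, Unitary.conjStarAlgAut_apply]
  set D : Matrix n n 𝕜 := diagonal (RCLike.ofReal ∘ f ∘ hH.eigenvalues)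
  rw [show U * D * star U * σ = U * (D * (star U * σ)) by simp only [mul_assoc], trace_mul_comm,
    mul_assoc, trace, map_sum]
  simp [D, diagonal_mul, populations, U, mul_assoc]

lemma populations_nonneg {σ : Matrix n n 𝕜} (hσ : σ.PosSemidef) (i : n) :
    0 ≤ hH.populations σ i := by
  have := (hσ.conjTranspose_mul_mul_same (hH.eigenvectorUnitary : Matrix n n 𝕜)).diag_nonneg
    (i := i)
  rw [← star_eq_conjTranspose] at this
  exact (RCLike.nonneg_iff.mp this).1

lemma populations_cfc (f : ℝ → ℝ) (i : n) :
    hH.populations (cfc f H) i = f (hH.eigenvalues i) := by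
  have hU := Unitary.star_mul_self_of_mem hH.eigenvectorUnitary.2
  rw [populations, hH.cfc_eq, IsHermitian.cfc, Unitary.conjStarAlgAut_apply]
  simp only [← mul_assoc, hU, one_mul]
  simp [mul_assoc, hU]

lemma sum_populations (σ : Matrix n n 𝕜) : ∑ i, hH.populations σ i = RCLike.re σ.trace := by
  simpa [cfc_one ℝ H hH.isSelfAdjoint] using (hH.re_trace_cfc_mul 1 σ).symm

lemma eigenvalues_le_one (hH1 : (1 - H).PosSemidef) (i : n) : hH.eigenvalues i ≤ 1 := by
  have h1 : 1 - H = cfc (fun x : ℝ => 1 - x) H := by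
    rw [cfc_sub (fun _ : ℝ => (1 : ℝ)) (fun x => x) H, cfc_const_one ℝ H hH.isSelfAdjoint,
      cfc_id' ℝ H hH.isSelfAdjoint]
  have h := hH.populations_nonneg (h1 ▸ hH1) i
  rwa [populations_cfc, sub_nonneg] at h

end Matrix.IsHermitian

section

variable {d : ℕ} {H : Matrix (Fin d) (Fin d) ℂ}

lemma spectralProj_eq_cfc (hH : H.IsHermitian) (E : ℝ) :
    spectralProj hH E = cfc (fun x => if x ≤ E then 1 else 0) H := by
  rw [hH.cfc_eq, IsHermitian.cfc, Unitary.conjStarAlgAut_apply, spectralProj]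
  congr
  ext i
  simp [apply_ite]

lemma mexp_neg_smul_eq_cfc (hH : H.IsHermitian) (b : ℝ) :
    mexp (-(b : ℂ) • H) = cfc (fun x => Real.exp (-(b * x))) H := by
  set U : Matrix (Fin d) (Fin d) ℂ := (hH.eigenvectorUnitary : Matrix (Fin d) (Fin d) ℂ)
  have hU : star U * U = 1 := Unitary.star_mul_self_of_mem hH.eigenvectorUnitary.2
  have hUinv : U⁻¹ = star U := inv_eq_left_inv hU
  have hsmul :
      -(b : ℂ) • H = U * diagonal (fun i => ((-(b * hH.eigenvalues i) : ℝ) : ℂ)) * U⁻¹ := by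
    conv_lhs => rw [hH.spectral_theorem, Unitary.conjStarAlgAut_apply]
    rw [hUinv, ← Matrix.smul_mul, ← Matrix.mul_smul, ← diagonal_smul]
    congr
    ext i
    simp
  rw [hH.cfc_eq, IsHermitian.cfc, Unitary.conjStarAlgAut_apply, mexp, hsmul,
    Matrix.exp_conj _ _ (.of_mul_eq_one_right _ hU), Matrix.exp_diagonal, hUinv]
  congr
  ext i
  simp [← Complex.exp_eq_exp_ℂ, Complex.ofReal_exp]

lemma re_trace_conj_mexp (hH : H.IsHermitian) (σ : Matrix (Fin d) (Fin d) ℂ) (β : ℝ) :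
    (mexp (-(β : ℂ) • H) * σ * mexp (-(β : ℂ) • H)).trace.re =
      ∑ i, Real.exp (-(2 * β * hH.eigenvalues i)) * hH.populations σ i := by
  rw [mexp_neg_smul_eq_cfc hH, trace_mul_cycle, ← cfc_mul _ _ H, ← RCLike.re_to_complex,
    hH.re_trace_cfc_mul]
  congr! 2 with i
  rw [← Real.exp_add]
  ring_nf

lemma re_trace_mul_conj_mexp (hH : H.IsHermitian) (σ : Matrix (Fin d) (Fin d) ℂ) (β : ℝ) :
    (H * (mexp (-(β : ℂ) • H) * σ * mexp (-(β : ℂ) • H))).trace.re =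
      ∑ i, hH.eigenvalues i * Real.exp (-(2 * β * hH.eigenvalues i)) * hH.populations σ i := by
  set f := fun x => Real.exp (-(β * x))
  have hEHE : cfc f H * H * cfc f H = cfc (fun x => f x * x * f x) H := by
    rw [cfc_mul _ _ H, cfc_mul _ _ H, cfc_id' ℝ H hH.isSelfAdjoint]
  rw [mexp_neg_smul_eq_cfc hH, trace_mul_comm, mul_assoc (_ * σ), trace_mul_comm (_ * σ),
    ← mul_assoc, hEHE, ← RCLike.re_to_complex, hH.re_trace_cfc_mul]
  congr! 2 with i
  rw [mul_right_comm, ← Real.exp_add]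
  ring_nf

lemma re_trace_spectralProj_mul (hH : H.IsHermitian) (E : ℝ) (σ : Matrix (Fin d) (Fin d) ℂ) :
    (spectralProj hH E * σ).trace.re = ∑ i with hH.eigenvalues i ≤ E, hH.populations σ i := by
  rw [spectralProj_eq_cfc, ← RCLike.re_to_complex, hH.re_trace_cfc_mul, Finset.sum_filter]
  simp only [ite_mul, one_mul, zero_mul]

end

open Real

lemma mul_exp_neg_mul_le {a t x y : ℝ} (ha : a ≤ 1) (ht : 0 ≤ t) (hyx : y ≤ x) :
    a * exp (-(t * x)) ≤ exp (-(t * y)) := by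
  have hexp : exp (-(t * x)) ≤ exp (-(t * y)) := by gcongr
  rcases le_or_gt a 0 with ha0 | ha0
  · nlinarith [exp_pos (-(t * x)), exp_pos (-(t * y))]
  · nlinarith [exp_pos (-(t * x))]

section Gibbs

variable {ι : Type*} [Fintype ι] {lam w : ι → ℝ} {g : ℝ}

lemma exp_neg_mul_mul_sum_le (hw : ∀ i, 0 ≤ w i) (hg : ∀ i, g ≤ lam i) (t : ℝ) :
    exp (-(t * g)) * ∑ i with lam i ≤ g, w i ≤ ∑ i, exp (-(t * lam i)) * w i := by
  rw [Finset.mul_sum, Finset.sum_filter]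
  refine Finset.sum_le_sum fun i _ => ?_
  split_ifs with hi
  · rw [le_antisymm hi (hg i)]
  · exact mul_nonneg (exp_pos _).le (hw i)

lemma sum_sub_mul_exp_neg_mul_le {δ c t : ℝ} (hw : ∀ i, 0 ≤ w i) (hsum : ∑ i, w i ≤ 1)
    (hg : ∀ i, g ≤ lam i) (hlam : ∀ i, lam i ≤ 1) (hgap : ∀ i, g < lam i → g + δ ≤ lam i)
    (hg0 : 0 ≤ g) (hc : 0 ≤ c) (ht : 0 ≤ t) :
    ∑ i, (lam i - (g + c)) * exp (-(t * lam i)) * w i ≤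
      -(c * exp (-(t * g)) * ∑ i with lam i ≤ g, w i) + exp (-(t * (g + δ))) := by
  have hterm : ∀ i, (lam i - (g + c)) * exp (-(t * lam i)) * w i ≤
      -(c * exp (-(t * g)) * (if lam i ≤ g then w i else 0)) + exp (-(t * (g + δ))) * w i := by
    intro i
    split_ifs with hi
    · rw [le_antisymm hi (hg i)]
      nlinarith [exp_pos (-(t * (g + δ))), hw i]
    · have := mul_exp_neg_mul_le (a := lam i - (g + c)) (by linarith [hlam i]) ht
        (hgap i (not_le.mp hi))
      rw [mul_zero, neg_zero, zero_add]
      exact mul_le_mul_of_nonneg_right this (hw i)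
  calc _ ≤ ∑ i, (-(c * exp (-(t * g)) * (if lam i ≤ g then w i else 0)) +
        exp (-(t * (g + δ))) * w i) := Finset.sum_le_sum fun i _ => hterm i
    _ = -(c * exp (-(t * g)) * ∑ i with lam i ≤ g, w i) + exp (-(t * (g + δ))) * ∑ i, w i := by
      rw [Finset.sum_add_distrib, Finset.sum_neg_distrib, ← Finset.mul_sum, ← Finset.mul_sum,
        Finset.sum_filter]
    _ ≤ _ := by nlinarith [exp_pos (-(t * (g + δ)))]

lemma sum_mul_exp_neg_mul_sub_le {δ c t : ℝ} (hw : ∀ i, 0 ≤ w i) (hsum : ∑ i, w i ≤ 1)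
    (hg : ∀ i, g ≤ lam i) (hlam : ∀ i, lam i ≤ 1) (hgap : ∀ i, g < lam i → g + δ ≤ lam i)
    (hg0 : 0 ≤ g) (hc : 0 ≤ c) (ht : 0 ≤ t)
    (hδ : exp (-(t * δ)) ≤ c * (∑ i with lam i ≤ g, w i) / 2) :
    ∑ i, lam i * exp (-(t * lam i)) * w i - (g + c) * ∑ i, exp (-(t * lam i)) * w i ≤
      -(c * exp (-(t * g)) * (∑ i with lam i ≤ g, w i) / 2) := by
  have hsub : ∑ i, lam i * exp (-(t * lam i)) * w i - (g + c) * ∑ i, exp (-(t * lam i)) * w i =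
      ∑ i, (lam i - (g + c)) * exp (-(t * lam i)) * w i := by
    rw [Finset.mul_sum, ← Finset.sum_sub_distrib]
    exact Finset.sum_congr rfl fun i _ => by ring
  have hexp : exp (-(t * (g + δ))) = exp (-(t * g)) * exp (-(t * δ)) := by
    rw [← exp_add]
    ring_nf
  have := sum_sub_mul_exp_neg_mul_le hw hsum hg hlam hgap hg0 hc ht
  rw [hsub]
  nlinarith [exp_pos (-(t * g))]

end Gibbs

lemma exists_pos_exp_neg_mul_le {δ a : ℝ} (hδ : 0 < δ) (ha : 0 < a) :
    ∃ t > 0, exp (-(t * δ)) ≤ a := by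
  have hlim : Filter.Tendsto (fun t => exp (-(t * δ))) Filter.atTop (nhds 0) :=
    tendsto_exp_neg_atTop_nhds_zero.comp (Filter.tendsto_id.atTop_mul_const hδ)
  exact ((Filter.eventually_gt_atTop 0).and (hlim.eventually (ge_mem_nhds ha))).exists

lemma exists_pos_mul_nat_eq_and_sq_mul_le {β ε : ℝ} (hβ : 0 < β) (hε : 0 < ε) :
    ∃ η > 0, ∃ T : ℕ, 1 ≤ T ∧ η * T = β ∧ η ^ 2 * T ≤ ε := by
  obtain ⟨T, hT⟩ := exists_nat_gt (max 1 (β ^ 2 / ε))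
  have hT1 : (1 : ℝ) ≤ T := (le_max_left _ _).trans hT.le
  have hT0 : (0 : ℝ) < T := one_pos.trans_le hT1
  refine ⟨β / T, by positivity, T, by exact_mod_cast hT1, by field_simp, ?_⟩
  have : β ^ 2 / ε ≤ T := (le_max_right _ _).trans hT.le
  rw [div_le_iff₀ hε] at this
  calc (β / T) ^ 2 * T = β ^ 2 / T := by field_simp
    _ ≤ ε := by rw [div_le_iff₀ hT0]; linarith

lemma pos_and_div_le_of_margin {Z N a κ γ c₁ c₂ : ℝ} (hκ : 0 < κ) (hκZ : κ ≤ Z)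
    (hNZ : N - a * Z ≤ -κ) (ha0 : 0 ≤ a) (ha2 : a ≤ 2) (hγ0 : 0 ≤ γ) (hγ : 12 * γ ≤ κ)
    (hc₁ : |c₁| ≤ 4) (hc₂ : |c₂| ≤ 4) :
    0 < Z + c₁ * γ ∧ (N + c₂ * γ) / (Z + c₁ * γ) ≤ a := by
  obtain ⟨hc₁l, hc₁u⟩ := abs_le.mp hc₁
  obtain ⟨hc₂l, hc₂u⟩ := abs_le.mp hc₂
  have hpos : 0 < Z + c₁ * γ := by nlinarith
  refine ⟨hpos, (div_le_iff₀ hpos).mpr ?_⟩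
  nlinarith [mul_nonneg ha0 hγ0, mul_nonneg (sub_nonneg.mpr ha2) hγ0]

/-- Theorem S2 (convergence to the global minimum): if the initial state `σ` has a
nonzero overlap with the ground space of `H`, then for every `c ∈ (0,1)` one can choose
a learning rate `η` and a number of steps `T` so that the averaged conditional loss is
at most `g + c`, robustly in the second-order corrections `c₁γ`, `c₂γ` with `|c₁|,|c₂| ≤ 4`. -/
theorem qal_convergence_to_global_minimum {d : ℕ} (H : Matrix (Fin d) (Fin d) ℂ)
    (hH : H.IsHermitian) (hH0 : H.PosSemidef) (hH1 : (1 - H).PosSemidef)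
    (g : ℝ) (hg : IsLeast (Set.range hH.eigenvalues) g)
    (δ : ℝ) (hδ : 0 < δ)
    (hgap : IsLeast {x | x ∈ Set.range hH.eigenvalues ∧ g < x} (g + δ))
    (σ : Matrix (Fin d) (Fin d) ℂ) (hσ : σ.PosSemidef) (hσtr : σ.trace = 1)
    (hσg : 0 < (spectralProj hH g * σ).trace.re)
    (c : ℝ) (hc : c ∈ Set.Ioo (0 : ℝ) 1) :
    ∃ (η : ℝ) (T : ℕ), 0 < η ∧ 1 ≤ T ∧
      ∀ c₁ c₂ : ℝ, |c₁| ≤ 4 → |c₂| ≤ 4 →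
        0 < (mexp (-(((η * T : ℝ)) : ℂ) • H) * σ * mexp (-(((η * T : ℝ)) : ℂ) • H)).trace.re
              + c₁ * (η ^ 2 * T) ∧
        ((H * (mexp (-(((η * T : ℝ)) : ℂ) • H) * σ * mexp (-(((η * T : ℝ)) : ℂ) • H))).trace.re
              + c₂ * (η ^ 2 * T)) /
          ((mexp (-(((η * T : ℝ)) : ℂ) • H) * σ * mexp (-(((η * T : ℝ)) : ℂ) • H)).trace.re
              + c₁ * (η ^ 2 * T)) ≤ g + c := by
  obtain ⟨hc0, hc1⟩ := hc
  have hw := hH.populations_nonneg hσ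
  have hsum : ∑ i, hH.populations σ i ≤ 1 := by simp [hH.sum_populations, hσtr]
  have hlam_g : ∀ i, g ≤ hH.eigenvalues i := fun i => hg.2 ⟨i, rfl⟩
  have hg0 : 0 ≤ g := by
    obtain ⟨i, rfl⟩ := hg.1
    exact hH0.eigenvalues_nonneg i
  have hg1 : g ≤ 1 := by
    obtain ⟨i, rfl⟩ := hg.1
    exact hH.eigenvalues_le_one hH1 i
  have hexcited : ∀ i, g < hH.eigenvalues i → g + δ ≤ hH.eigenvalues i :=
    fun i hi => hgap.2 ⟨⟨i, rfl⟩, hi⟩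
  rw [re_trace_spectralProj_mul] at hσg
  set σg := ∑ i with hH.eigenvalues i ≤ g, hH.populations σ i
  obtain ⟨t, ht, htδ⟩ := exists_pos_exp_neg_mul_le hδ (by positivity : 0 < c * σg / 2)
  set κ := c * exp (-(t * g)) * σg / 2 with hκ
  obtain ⟨η, hη, T, hT, hηT, hγ⟩ :=
    exists_pos_mul_nat_eq_and_sq_mul_le (half_pos ht) (by positivity : 0 < κ / 12)
  refine ⟨η, T, hη, hT, fun c₁ c₂ hc₁ hc₂ => ?_⟩
  rw [hηT, re_trace_mul_conj_mexp hH, re_trace_conj_mexp hH, mul_div_cancel₀ t two_ne_zero]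
  refine pos_and_div_le_of_margin (κ := κ) (by positivity) ?_
    (sum_mul_exp_neg_mul_sub_le hw hsum hlam_g (hH.eigenvalues_le_one hH1) hexcited hg0 hc0.le
      ht.le htδ) (by positivity) (by linarith) (by positivity) (by linarith) hc₁ hc₂
  calc κ ≤ exp (-(t * g)) * σg := by rw [hκ]; nlinarith [mul_pos (exp_pos (-(t * g))) hσg]
    _ ≤ _ := exp_neg_mul_mul_sum_le hw hlam_g t
end

section
/- Let H be a d×d complex Hermitian matrix, let E ∈ ℝ, let Π be an orthogonal projection matrix (Π = Π* = Π²) commuting with H and satisfying ΠHΠ ⪯ E·Π, let σ be a d×d positive semidefinite Hermitian matrix, and let β ≥ 0. Then tr(e^{−βH} Π e^{−βH} σ) ≥ e^{−2βE} · tr(Π σ). -/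
/-!
Since `P` commutes with `H`, `e^{-βH} P e^{-βH} = P e^{-2βH} P`. The tangent line of `exp`
at `-2βE`, applied through the functional calculus, gives
`e^{-2βH} ⪰ e^{-2βE} (1 - 2β (H - E))`, and compressing by `P` turns the right-hand side into
`e^{-2βE} (P + 2β (E P - P H P)) ⪰ e^{-2βE} P`. Finally `X ↦ tr (X σ)` is monotone for `σ ⪰ 0`.
-/

open Matrix
open scoped ComplexOrder

-- `NormedSpace.exp` does not depend on the norm; this one only supplies the Banach algebra
-- structure that the exponential and functional calculus lemmas ask for.
open scoped MatrixOrder Matrix.Norms.L2Operator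

theorem IsSelfAdjoint.exp_smul_sub_add_one_le_exp {A : Type*} [NormedRing A] [StarRing A]
    [NormedAlgebra ℝ A] [PartialOrder A] [StarOrderedRing A]
    [ContinuousFunctionalCalculus ℝ A IsSelfAdjoint] {a : A} (ha : IsSelfAdjoint a) (t : ℝ) :
    Real.exp t • (a - algebraMap ℝ A t + 1) ≤ NormedSpace.exp a := by
  have hcfc : cfc (fun x => Real.exp t * (x - t + 1)) a =
      Real.exp t • (a - algebraMap ℝ A t + 1) := by
    rw [cfc_const_mul .., cfc_add .., cfc_sub .., cfc_id' .., cfc_const .., cfc_const_one ..]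
  rw [← hcfc, ← CFC.real_exp_eq_normedSpace_exp ha]
  refine cfc_mono fun x _ => ?_
  calc Real.exp t * (x - t + 1) ≤ Real.exp t * Real.exp (x - t) :=
        mul_le_mul_of_nonneg_left (Real.add_one_le_exp _) (Real.exp_nonneg t)
    _ = Real.exp x := by rw [← Real.exp_add, add_sub_cancel]

open NormedSpace in
theorem IsIdempotentElem.exp_mul_mul_exp_of_commute {A : Type*} [NormedRing A]
    [NormedAlgebra ℚ A] [CompleteSpace A] {p x : A} (hp : IsIdempotentElem p)
    (hpx : Commute p x) : exp x * p * exp x = p * exp (x + x) * p := by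
  have hpe : p * exp x = exp x * p := hpx.exp_right.eq
  calc exp x * p * exp x = exp x * (p * p) * exp x := by rw [hp.eq]
    _ = (exp x * p) * (p * exp x) := by simp only [mul_assoc]
    _ = (p * exp x) * (exp x * p) := by rw [hpe]
    _ = p * exp (x + x) * p := by
      rw [NormedSpace.exp_add_of_commute (.refl x)]
      simp only [mul_assoc]

theorem Matrix.trace_mul_le_trace_mul_of_le {n 𝕜 : Type*} [Fintype n] [RCLike 𝕜]
    {A B S : Matrix n n 𝕜} (hAB : A ≤ B) (hS : S.PosSemidef) :
    (A * S).trace ≤ (B * S).trace := by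
  classical
  obtain ⟨C, rfl⟩ := CStarAlgebra.nonneg_iff_eq_star_mul_self.mp hS.nonneg
  rw [← sub_nonneg, ← trace_sub, ← sub_mul, ← mul_assoc, trace_mul_cycle]
  exact ((Matrix.le_iff.mp hAB).mul_mul_conjTranspose_same C).trace_nonneg

/-- If `P` is an orthogonal projection commuting with the Hermitian matrix `H`, with
`PHP ⪯ E·P`, then for any positive semidefinite `σ` and `β ≥ 0`,
`tr(e^{−βH} P e^{−βH} σ) ≥ e^{−2βE}·tr(Pσ)`. -/
theorem trace_exp_proj_exp_ge {d : ℕ} (H P σ : Matrix (Fin d) (Fin d) ℂ)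
    (hH : H.IsHermitian) (E : ℝ)
    (hPherm : P = Pᴴ) (hPidem : P = P * P) (hcomm : P * H = H * P)
    (hPHE : ((E : ℂ) • P - P * H * P).PosSemidef)
    (hσ : σ.PosSemidef) (β : ℝ) (hβ : 0 ≤ β) :
    Real.exp (-2 * β * E) * (P * σ).trace.re
      ≤ (mexp (-((β : ℂ) • H)) * P * mexp (-((β : ℂ) • H)) * σ).trace.re := by
  set x := -((β : ℂ) • H)
  set e := Real.exp (-2 * β * E)
  have hx : IsSelfAdjoint x := (IsSelfAdjoint.smul (Complex.conj_ofReal β) hH.isSelfAdjoint).neg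
  have hxP : Commute P x := ((show Commute P H from hcomm).smul_right _).neg_right
  have hcompress : P * (e • (x + x - algebraMap ℝ _ (-2 * β * E) + 1)) * P - e • P =
      ((2 * β * e : ℝ) : ℂ) • ((E : ℂ) • P - P * H * P) := by
    simp only [x, Algebra.algebraMap_eq_smul_one, mul_add, add_mul, mul_sub, sub_mul,
      mul_smul_comm, smul_mul_assoc, mul_neg, neg_mul, mul_one, ← hPidem, ← Complex.coe_smul]
    push_cast
    module
  have hlower : e • P ≤ P * mexp (x + x) * P :=
    calc e • P ≤ P * (e • (x + x - algebraMap ℝ _ (-2 * β * E) + 1)) * P := by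
          rw [Matrix.le_iff, hcompress]
          exact hPHE.smul (Complex.zero_le_real.mpr (by positivity))
      _ ≤ P * mexp (x + x) * P := IsSelfAdjoint.conjugate_le_conjugate
          ((hx.add hx).exp_smul_sub_add_one_le_exp _) hPherm.symm
  have htrace := (Complex.le_def.mp (trace_mul_le_trace_mul_of_le hlower hσ)).1
  let +nondep : NormedAlgebra ℚ (Matrix (Fin d) (Fin d) ℂ) := .restrictScalars ℚ ℂ _
  rw [mexp, IsIdempotentElem.exp_mul_mul_exp_of_commute hPidem.symm hxP]
  simpa [mexp] using htrace
end

section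
/- Let k ≥ 1, let y ∈ {0, …, k−1}, and let η ∈ [0, 1]. Let M be the k×k real diagonal matrix with entry 1 in position (y, y) and 1−η in every other diagonal position, and let N be the k×k diagonal matrix with entry 0 in position (y, y) and √(2η − η²) in every other diagonal position. Let Z = [[1, 0], [0, −1]] and X = [[0, 1], [1, 0]] be the Pauli matrices. Then the (2k)×(2k) complex matrix U = M ⊗ Z + N ⊗ X (Kronecker product) is unitary, i.e., U*U = I. -/
open Matrix
open scoped Kronecker

lemma kron_conjTranspose {m n : Type*} (A : Matrix m m ℂ) (B : Matrix n n ℂ) :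
    (A ⊗ₖ B)ᴴ = Aᴴ ⊗ₖ Bᴴ := by
  ext ⟨i1, i2⟩ ⟨j1, j2⟩
  simp [Matrix.conjTranspose_apply, Matrix.kroneckerMap_apply, mul_comm]

lemma kron_neg_right {m n : Type*} (A : Matrix m m ℂ) (B : Matrix n n ℂ) :
    A ⊗ₖ (-B) = -(A ⊗ₖ B) := by
  ext ⟨i1, i2⟩ ⟨j1, j2⟩
  simp [Matrix.kroneckerMap_apply]

/-- The target-oriented perturbation unitary: for `M_y = |y⟩⟨y| + (1−η)(I − |y⟩⟨y|)` and
`N = √(I − M_y²)`, the block encoding `U = M_y ⊗ Z + N ⊗ X` is unitary. -/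
theorem target_perturbation_unitary (k : ℕ) (hk : 1 ≤ k) (y : Fin k)
    (η : ℝ) (hη : η ∈ Set.Icc (0 : ℝ) 1)
    (M N : Matrix (Fin k) (Fin k) ℂ)
    (hM : M = Matrix.diagonal fun i => if i = y then (1 : ℂ) else ((1 - η : ℝ) : ℂ))
    (hN : N = Matrix.diagonal fun i =>
      if i = y then (0 : ℂ) else ((Real.sqrt (2 * η - η ^ 2) : ℝ) : ℂ))
    (Z X : Matrix (Fin 2) (Fin 2) ℂ)
    (hZ : Z = !![1, 0; 0, -1]) (hX : X = !![0, 1; 1, 0]) :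
    (M ⊗ₖ Z + N ⊗ₖ X)ᴴ * (M ⊗ₖ Z + N ⊗ₖ X) = 1 := by
  obtain ⟨hη0, hη1⟩ := hη
  have hMH : Mᴴ = M := by
    subst hM; rw [Matrix.diagonal_conjTranspose]
    exact congrArg Matrix.diagonal (funext fun i => by by_cases h : i = y <;> simp [h])
  have hNH : Nᴴ = N := by
    subst hN; rw [Matrix.diagonal_conjTranspose]
    exact congrArg Matrix.diagonal (funext fun i => by by_cases h : i = y <;> simp [h])
  have hZH : Zᴴ = Z := by subst hZ; ext i j; fin_cases i <;> fin_cases j <;> simp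
  have hXH : Xᴴ = X := by subst hX; ext i j; fin_cases i <;> fin_cases j <;> simp
  have hZZ : Z * Z = 1 := by
    subst hZ; rw [Matrix.mul_fin_two, Matrix.one_fin_two]; norm_num
  have hXX : X * X = 1 := by
    subst hX; rw [Matrix.mul_fin_two, Matrix.one_fin_two]; norm_num
  have hZX : Z * X = -(X * Z) := by
    subst hZ hX; norm_num [Matrix.mul_fin_two]
  have hMN : M * N = N * M := by
    subst hM hN; rw [Matrix.diagonal_mul_diagonal, Matrix.diagonal_mul_diagonal]
    exact congrArg Matrix.diagonal (funext fun i => mul_comm _ _)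
  have hs : Real.sqrt (2 * η - η ^ 2) * Real.sqrt (2 * η - η ^ 2) = 2 * η - η ^ 2 :=
    Real.mul_self_sqrt (by nlinarith)
  have hMMNN : M * M + N * N = 1 := by
    subst hM hN
    rw [Matrix.diagonal_mul_diagonal, Matrix.diagonal_mul_diagonal, Matrix.diagonal_add,
      ← Matrix.diagonal_one]
    refine congrArg Matrix.diagonal (funext fun i => ?_)
    by_cases h : i = y
    · simp only [h, if_pos rfl]; norm_num
    · simp only [h, if_false]
      have key : ((1 - η) * (1 - η)
          + Real.sqrt (2 * η - η ^ 2) * Real.sqrt (2 * η - η ^ 2) : ℝ) = 1 := by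
        rw [hs]; ring
      rw [← Complex.ofReal_mul, ← Complex.ofReal_mul, ← Complex.ofReal_add, key,
        Complex.ofReal_one]
  rw [Matrix.conjTranspose_add, kron_conjTranspose, kron_conjTranspose,
    hMH, hNH, hZH, hXH, Matrix.add_mul, Matrix.mul_add, Matrix.mul_add,
    ← Matrix.mul_kronecker_mul, ← Matrix.mul_kronecker_mul, ← Matrix.mul_kronecker_mul,
    ← Matrix.mul_kronecker_mul, hZZ, hXX, hZX, hMN, kron_neg_right]
  rw [show (M * M) ⊗ₖ (1:Matrix (Fin 2) (Fin 2) ℂ) + -((N * M) ⊗ₖ (X * Z)) +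
      ((N * M) ⊗ₖ (X * Z) + (N * N) ⊗ₖ (1:Matrix (Fin 2) (Fin 2) ℂ))
      = (M * M) ⊗ₖ (1:Matrix (Fin 2) (Fin 2) ℂ) + (N * N) ⊗ₖ (1:Matrix (Fin 2) (Fin 2) ℂ)
      by abel]
  rw [← Matrix.add_kronecker, hMMNN, Matrix.one_kronecker_one]
end

section
/- Let k ≥ 1, let y ∈ {0, …, k−1}, and let η ∈ [0, 1]. Let P be the k×k matrix |y⟩⟨y| (entry 1 in position (y, y), zero elsewhere), let M be the k×k diagonal matrix with entry 1 in position (y, y) and 1−η elsewhere on the diagonal, let N be the k×k diagonal matrix with entry 0 in position (y, y) and √(2η − η²) elsewhere on the diagonal, let Z = [[1, 0], [0, −1]] and X = [[0, 1], [1, 0]], and set V = (1−η)·Z + √(2η − η²)·X. Then M ⊗ Z + N ⊗ X = (I_k ⊗ V) · ( P ⊗ (V·Z) + (I_k − P) ⊗ I₂ ), where I_k and I₂ are identity matrices of sizes k and 2 and ⊗ is the Kronecker product. -/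
/-!
Both sides equal `P ⊗ Z + (1 - P) ⊗ V`. On the left this is linearity of `⊗`, since
`M = P + (1 - η)(1 - P)` and `N = √(2η - η²)(1 - P)`. On the right it follows from `V * V = 1`:
`Z` and `X` are anticommuting involutions, so `V² = ((1 - η)² + (2η - η²)) • 1`.
-/

open Matrix
open scoped Kronecker

theorem smul_add_smul_mul_self_of_anticommute {R A : Type*} [CommRing R] [Ring A] [Algebra R A]
    {Z X : A} (hZ : Z * Z = 1) (hX : X * X = 1) (hZX : Z * X + X * Z = 0) (c s : R) :
    (c • Z + s • X) * (c • Z + s • X) = (c * c + s * s) • 1 := by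
  have hXZ : X * Z = -(Z * X) := eq_neg_of_add_eq_zero_right hZX
  simp only [add_mul, mul_add, smul_mul_smul_comm, hZ, hX, hXZ, smul_neg, add_smul]
  rw [mul_comm s c]; abel

theorem pauliZ_mul_self {R : Type*} [Ring R] :
    !![(1 : R), 0; 0, -1] * !![1, 0; 0, -1] = 1 := by
  simp [one_fin_two]

theorem pauliX_mul_self {R : Type*} [Ring R] :
    !![(0 : R), 1; 1, 0] * !![0, 1; 1, 0] = 1 := by
  simp [one_fin_two]

theorem pauliZ_mul_pauliX_add_pauliX_mul_pauliZ {R : Type*} [Ring R] :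
    !![(1 : R), 0; 0, -1] * !![0, 1; 1, 0] + !![0, 1; 1, 0] * !![1, 0; 0, -1] = 0 := by
  simp [← Matrix.ext_iff, Fin.forall_fin_two]

theorem diagonal_ite_eq_smul_single_add {n α : Type*} [DecidableEq n] [Ring α] (y : n) (a b : α) :
    diagonal (fun i => if i = y then a else b) = a • single y y 1 + b • (1 - single y y 1) := by
  ext i j
  by_cases hij : i = j
  · subst hij
    by_cases hiy : i = y
    · subst hiy; simp
    · simp [hiy, Ne.symm hiy]
  · have hy : ¬(y = i ∧ y = j) := fun h => hij (h.1 ▸ h.2)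
    simp [hij, one_apply_ne hij, hy]

theorem one_kronecker_mul_controlled {m n α : Type*} [Fintype m] [DecidableEq m] [Fintype n]
    [DecidableEq n] [CommRing α] (P : Matrix m m α) {V : Matrix n n α} (hV : V * V = 1)
    (Z : Matrix n n α) :
    ((1 : Matrix m m α) ⊗ₖ V) * (P ⊗ₖ (V * Z) + (1 - P) ⊗ₖ 1) = P ⊗ₖ Z + (1 - P) ⊗ₖ V := by
  rw [mul_add, ← mul_kronecker_mul, ← mul_kronecker_mul, ← Matrix.mul_assoc, hV,
    one_mul, one_mul, one_mul, mul_one]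

theorem target_perturbation_decomposition_general (k : ℕ) (y : Fin k)
    (η : ℝ) (hη : η ∈ Set.Icc (0 : ℝ) 1)
    (P M N : Matrix (Fin k) (Fin k) ℂ)
    (hP : P = Matrix.single y y (1 : ℂ))
    (hM : M = Matrix.diagonal fun i => if i = y then (1 : ℂ) else ((1 - η : ℝ) : ℂ))
    (hN : N = Matrix.diagonal fun i =>
      if i = y then (0 : ℂ) else ((Real.sqrt (2 * η - η ^ 2) : ℝ) : ℂ))
    (Z X V : Matrix (Fin 2) (Fin 2) ℂ)
    (hZ : Z = !![1, 0; 0, -1]) (hX : X = !![0, 1; 1, 0])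
    (hV : V = ((1 - η : ℝ) : ℂ) • Z + ((Real.sqrt (2 * η - η ^ 2) : ℝ) : ℂ) • X) :
    M ⊗ₖ Z + N ⊗ₖ X =
      ((1 : Matrix (Fin k) (Fin k) ℂ) ⊗ₖ V) *
        (P ⊗ₖ (V * Z) + ((1 : Matrix (Fin k) (Fin k) ℂ) - P) ⊗ₖ (1 : Matrix (Fin 2) (Fin 2) ℂ)) := by
  have hcs : ((1 - η : ℝ) : ℂ) * ((1 - η : ℝ) : ℂ)
      + ((√(2 * η - η ^ 2) : ℝ) : ℂ) * ((√(2 * η - η ^ 2) : ℝ) : ℂ) = 1 := by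
    have hnonneg : 0 ≤ 2 * η - η ^ 2 := by nlinarith [hη.1, hη.2]
    rw [← Complex.ofReal_mul, ← Complex.ofReal_mul, Real.mul_self_sqrt hnonneg]
    push_cast; ring
  have hVV : V * V = 1 := by
    rw [hV, smul_add_smul_mul_self_of_anticommute (hZ ▸ pauliZ_mul_self) (hX ▸ pauliX_mul_self)
      (hZ ▸ hX ▸ pauliZ_mul_pauliX_add_pauliX_mul_pauliZ), hcs, one_smul]
  rw [one_kronecker_mul_controlled P hVV, hM, hN, diagonal_ite_eq_smul_single_add,
    diagonal_ite_eq_smul_single_add, ← hP, hV]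
  simp only [add_kronecker, smul_kronecker, kronecker_add, kronecker_smul, one_smul, zero_smul,
    zero_add]
  abel

/-- The decomposition of the target-oriented perturbation unitary:
`M ⊗ Z + N ⊗ X = (I ⊗ V)·(P ⊗ (V·Z) + (I − P) ⊗ I)` where
`V = (1−η)·Z + √(2η−η²)·X` and `P = |y⟩⟨y|`. -/
theorem target_perturbation_decomposition (k : ℕ) (hk : 1 ≤ k) (y : Fin k)
    (η : ℝ) (hη : η ∈ Set.Icc (0 : ℝ) 1)
    (P M N : Matrix (Fin k) (Fin k) ℂ)
    (hP : P = Matrix.single y y (1 : ℂ))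
    (hM : M = Matrix.diagonal fun i => if i = y then (1 : ℂ) else ((1 - η : ℝ) : ℂ))
    (hN : N = Matrix.diagonal fun i =>
      if i = y then (0 : ℂ) else ((Real.sqrt (2 * η - η ^ 2) : ℝ) : ℂ))
    (Z X V : Matrix (Fin 2) (Fin 2) ℂ)
    (hZ : Z = !![1, 0; 0, -1]) (hX : X = !![0, 1; 1, 0])
    (hV : V = ((1 - η : ℝ) : ℂ) • Z + ((Real.sqrt (2 * η - η ^ 2) : ℝ) : ℂ) • X) :
    M ⊗ₖ Z + N ⊗ₖ X =
      ((1 : Matrix (Fin k) (Fin k) ℂ) ⊗ₖ V) *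
        (P ⊗ₖ (V * Z) + ((1 : Matrix (Fin k) (Fin k) ℂ) - P) ⊗ₖ (1 : Matrix (Fin 2) (Fin 2) ℂ)) :=
  target_perturbation_decomposition_general k y η hη P M N hP hM hN Z X V hZ hX hV
end
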